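/- arXiv:1902.07689 — 2 statements merged into one kernel-verified Lean document; each statement's English description precedes it below -/
import Mathlib

section
/- Let 𝓛 be a subspace lattice on a complex separable Hilbert space H, let T be a bounded operator on H and let M₁, M₂ ∈ 𝓛 with M₁ ⊊ M₂. If ω_T(M₁) ≠ ω_T(M₂), then φ_T(M₁) ⊊ φ_T(M₂) and Ψ_T(M₁) ⊊ Ψ_T(M₂). -/
open scoped InnerProductSpace

variable {H : Type*} [NormedAddCommGroup H] [InnerProductSpace ℂ H]
  [CompleteSpace H] [TopologicalSpace.SeparableSpace H]

/-- A subspace lattice on `H`: a set of closed subspaces containing `⊥` and `⊤`,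
closed under arbitrary intersections and closed linear spans. -/
def IsSubspaceLattice (𝓛 : Set (Submodule ℂ H)) : Prop :=
  (∀ M ∈ 𝓛, IsClosed (M : Set H)) ∧ ⊥ ∈ 𝓛 ∧ ⊤ ∈ 𝓛 ∧
  (∀ S ⊆ 𝓛, sInf S ∈ 𝓛) ∧ (∀ S ⊆ 𝓛, (sSup S).topologicalClosure ∈ 𝓛)

/-- A nest: a totally ordered subspace lattice. -/
def IsNest (𝓛 : Set (Submodule ℂ H)) : Prop :=
  IsSubspaceLattice 𝓛 ∧ ∀ M ∈ 𝓛, ∀ N ∈ 𝓛, M ≤ N ∨ N ≤ M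

/-- A continuous nest. -/
def IsContinuousNest (𝓛 : Set (Submodule ℂ H)) : Prop :=
  IsNest 𝓛 ∧ ∀ M ∈ 𝓛, M = (sSup {N ∈ 𝓛 | N < M}).topologicalClosure

/-- `M_x`: the intersection of all members of `𝓛` containing `x`. -/
noncomputable def Mx (𝓛 : Set (Submodule ℂ H)) (x : H) : Submodule ℂ H :=
  sInf {M ∈ 𝓛 | x ∈ M}

/-- `M̂_x`: the closed span of all members of `𝓛` orthogonal to `x`. -/
noncomputable def Mhat (𝓛 : Set (Submodule ℂ H)) (x : H) : Submodule ℂ H :=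
  (sSup {M ∈ 𝓛 | ∀ v ∈ M, inner ℂ x v = (0 : ℂ)}).topologicalClosure

/-- `φ_T(M)`: the closed span of all members `M'` of `𝓛` with `T(M') ⊆ M`. -/
noncomputable def phiT (𝓛 : Set (Submodule ℂ H)) (T : H →L[ℂ] H) (M : Submodule ℂ H) :
    Submodule ℂ H :=
  (sSup {M' ∈ 𝓛 | ∀ v ∈ M', T v ∈ M}).topologicalClosure

/-- `Ψ_T(M)`: the intersection of all `M' ∈ 𝓛` with `φ_T(M') = φ_T(M)`. -/
noncomputable def PsiT (𝓛 : Set (Submodule ℂ H)) (T : H →L[ℂ] H) (M : Submodule ℂ H) :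
    Submodule ℂ H :=
  sInf {M' ∈ 𝓛 | phiT 𝓛 T M' = phiT 𝓛 T M}

/-- `σ_T(M)`: the closed span of all `M' ∈ 𝓛` with `φ_T(M') = φ_T(M)`. -/
noncomputable def sigmaT (𝓛 : Set (Submodule ℂ H)) (T : H →L[ℂ] H) (M : Submodule ℂ H) :
    Submodule ℂ H :=
  (sSup {M' ∈ 𝓛 | phiT 𝓛 T M' = phiT 𝓛 T M}).topologicalClosure

/-- The kernel map `ω_T`. -/
noncomputable def omegaT (𝓛 : Set (Submodule ℂ H)) (T : H →L[ℂ] H) (M : Submodule ℂ H) :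
    Submodule ℂ H × Submodule ℂ H :=
  (phiT 𝓛 T M, PsiT 𝓛 T M)

/-- The rank-one operator `x ⊗ y : z ↦ ⟨z, y⟩ x`. -/
noncomputable def rankOne (x y : H) : H →L[ℂ] H :=
  (innerSL ℂ y).smulRight x

/-- The nest algebra of a subspace lattice. -/
def nestAlg (𝓛 : Set (Submodule ℂ H)) : Set (H →L[ℂ] H) :=
  {T | ∀ M ∈ 𝓛, ∀ v ∈ M, T v ∈ M}

/-- Lie module over the nest algebra. -/
def IsLieModule (𝓛 : Set (Submodule ℂ H)) (𝓜 : Submodule ℂ (H →L[ℂ] H)) : Prop :=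
  ∀ A ∈ 𝓜, ∀ T ∈ nestAlg 𝓛, A.comp T - T.comp A ∈ 𝓜

/-- Orthogonal projection of a vector onto a closed subspace (junk value `0` if not closed). -/
noncomputable def projVec (N : Submodule ℂ H) (z : H) : H := by
  classical
  exact if h : IsClosed (N : Set H) then
    have : CompleteSpace N := h.completeSpace_coe
    (N.orthogonalProjectionOnto z : H)
  else 0

/-! `φ_T` behaves like the right adjoint of `M' ↦ T(M')`, restricted to `𝓛` and to closed targets.
As a consequence `φ_T` is monotone and preserves meets, and `Ψ_T` is monotone because `𝓛` is
closed under meets. Since `Ψ_T(M)` depends only on `φ_T(M)` and `φ_T(Ψ_T(M)) = φ_T(M)`, the two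
components of `ω_T` determine each other, so `ω_T(M₁) ≠ ω_T(M₂)` makes both inclusions strict. -/

section KernelMap

variable {H : Type*} [NormedAddCommGroup H] [InnerProductSpace ℂ H]
  {𝓛 : Set (Submodule ℂ H)} (T : H →L[ℂ] H)

lemma phiT_le_comap {M : Submodule ℂ H} (hM : IsClosed (M : Set H)) :
    phiT 𝓛 T M ≤ M.comap (T : H →ₗ[ℂ] H) :=
  Submodule.topologicalClosure_minimal _ (sSup_le fun _ hN v hv => hN.2 v hv)
    (hM.preimage T.continuous)

lemma le_phiT {N M : Submodule ℂ H} (hN : N ∈ 𝓛) (h : N ≤ M.comap (T : H →ₗ[ℂ] H)) :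
    N ≤ phiT 𝓛 T M :=
  (le_sSup (Set.mem_sep hN fun _ hv => h hv)).trans (Submodule.le_topologicalClosure _)

lemma phiT_mem (h𝓛 : IsSubspaceLattice 𝓛) (M : Submodule ℂ H) : phiT 𝓛 T M ∈ 𝓛 :=
  h𝓛.2.2.2.2 _ fun _ hN => hN.1

lemma phiT_mono {M₁ M₂ : Submodule ℂ H} (h : M₁ ≤ M₂) : phiT 𝓛 T M₁ ≤ phiT 𝓛 T M₂ :=
  Submodule.topologicalClosure_mono <| sSup_le_sSup fun _ hN => ⟨hN.1, fun v hv => h (hN.2 v hv)⟩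

lemma phiT_inf (h𝓛 : IsSubspaceLattice 𝓛) {M N : Submodule ℂ H} (hM : IsClosed (M : Set H))
    (hN : IsClosed (N : Set H)) : phiT 𝓛 T (M ⊓ N) = phiT 𝓛 T M ⊓ phiT 𝓛 T N := by
  refine le_antisymm (le_inf (phiT_mono T inf_le_left) (phiT_mono T inf_le_right)) ?_
  have hmem : phiT 𝓛 T M ⊓ phiT 𝓛 T N ∈ 𝓛 := by
    simpa only [sInf_pair] using
      h𝓛.2.2.2.1 {phiT 𝓛 T M, phiT 𝓛 T N} (Set.pair_subset (phiT_mem T h𝓛 M) (phiT_mem T h𝓛 N))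
  refine le_phiT T hmem ?_
  rw [Submodule.comap_inf]
  exact inf_le_inf (phiT_le_comap T hM) (phiT_le_comap T hN)

lemma phiT_PsiT (h𝓛 : IsSubspaceLattice 𝓛) {M : Submodule ℂ H} (hM : M ∈ 𝓛) :
    phiT 𝓛 T (PsiT 𝓛 T M) = phiT 𝓛 T M := by
  refine le_antisymm (phiT_mono T (sInf_le ⟨hM, rfl⟩)) (le_phiT T (phiT_mem T h𝓛 M) ?_)
  intro v hv
  refine Submodule.mem_sInf.2 fun M' ⟨hM', hphi⟩ => ?_
  exact phiT_le_comap T (h𝓛.1 M' hM') (hphi ▸ hv)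

lemma PsiT_mono (h𝓛 : IsSubspaceLattice 𝓛) {M₁ M₂ : Submodule ℂ H} (h₁ : M₁ ∈ 𝓛)
    (hle : M₁ ≤ M₂) : PsiT 𝓛 T M₁ ≤ PsiT 𝓛 T M₂ := by
  refine le_sInf fun M' ⟨hM', hphi⟩ => ?_
  have hmeet : M₁ ⊓ M' ∈ 𝓛 := by
    simpa only [sInf_pair] using h𝓛.2.2.2.1 {M₁, M'} (Set.pair_subset h₁ hM')
  have hphi_meet : phiT 𝓛 T (M₁ ⊓ M') = phiT 𝓛 T M₁ := by
    rw [phiT_inf T h𝓛 (h𝓛.1 M₁ h₁) (h𝓛.1 M' hM'), hphi, inf_eq_left]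
    exact phiT_mono T hle
  exact (sInf_le (Set.mem_sep hmeet hphi_meet)).trans inf_le_right

end KernelMap

theorem stmt_7 (𝓛 : Set (Submodule ℂ H)) (h𝓛 : IsSubspaceLattice 𝓛)
    (T : H →L[ℂ] H) (M₁ M₂ : Submodule ℂ H) (h₁ : M₁ ∈ 𝓛) (h₂ : M₂ ∈ 𝓛)
    (hlt : M₁ < M₂) (hne : omegaT 𝓛 T M₁ ≠ omegaT 𝓛 T M₂) :
    phiT 𝓛 T M₁ < phiT 𝓛 T M₂ ∧ PsiT 𝓛 T M₁ < PsiT 𝓛 T M₂ := by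
  have hphi_ne : phiT 𝓛 T M₁ ≠ phiT 𝓛 T M₂ := fun h => hne (by simp only [omegaT, PsiT, h])
  have hPsi_ne : PsiT 𝓛 T M₁ ≠ PsiT 𝓛 T M₂ := fun h =>
    hphi_ne (by rw [← phiT_PsiT T h𝓛 h₁, ← phiT_PsiT T h𝓛 h₂, h])
  exact ⟨(phiT_mono T hlt.le).lt_of_ne hphi_ne, (PsiT_mono T h𝓛 h₁ hlt.le).lt_of_ne hPsi_ne⟩
end

section
/- Let 𝓛 be a continuous nest on a complex separable Hilbert space H and let 𝓜 be a norm closed Lie 𝓣(𝓛)-module. If x, y ∈ H are nonzero and the rank-one operator x⊗y belongs to 𝓜, then for all z, w ∈ H and all M ∈ 𝓛 the operator (Q_{M^⊥}(Q_{M_x} z)) ⊗ (Q_M(Q_{(M̂_y)^⊥} w)) belongs to 𝓜. (In projection terms: Q_{M^⊥}((Q_{M_x}z) ⊗ (Q_{(M̂_y)^⊥}w))Q_M ∈ 𝓜.) -/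
open scoped InnerProductSpace

variable {H : Type*} [NormedAddCommGroup H] [InnerProductSpace ℂ H]
  [CompleteSpace H] [TopologicalSpace.SeparableSpace H]

/-!
Put `u = Q_{M⊥} Q_{M_x} z` and `v = Q_M Q_{(M̂_y)⊥} w`; one of them vanishes unless
`M̂_y < M < M_x`. In that case take `N₁ < M_x` and `M̂_y < N₂ ≤ M` in `𝓛`, `a ∈ N₁ ∩ M⊥` and
`d ∈ M ∩ N₂⊥`. Commutators with rank-one operators `e ⊗ f` (`e ∈ N`, `f ∈ N⊥`, `N ∈ 𝓛`), which lie
in `𝓣(𝓛)`, carry `x ⊗ y` successively to `x ⊗ d₀`, `a ⊗ d₀` and `a ⊗ d`, where `d₀ ∈ N₂` is a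
nonzero vector orthogonal to `x` that continuity of the nest provides. Continuity of the nest also
makes such `a` accumulate at `u` and such `d` at `v`, and `𝓜` is closed.
-/

open Submodule

section Projection

variable {𝕜 E : Type*} [RCLike 𝕜] [NormedAddCommGroup E] [InnerProductSpace 𝕜 E]

lemma starProjection_orthogonal_mem_of_le {K N : Submodule 𝕜 E} [K.HasOrthogonalProjection]
    (hKN : K ≤ N) {s : E} (hs : s ∈ N) : Kᗮ.starProjection s ∈ N := by
  rw [starProjection_orthogonal_val]
  exact N.sub_mem hs (hKN (K.starProjection_apply_mem s))

lemma starProjection_mem_orthogonal_of_le {K N : Submodule 𝕜 E} [K.HasOrthogonalProjection]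
    (hNK : N ≤ K) {t : E} (ht : t ∈ Nᗮ) : K.starProjection t ∈ Nᗮ := by
  rw [← sub_sub_cancel t (K.starProjection t), ← starProjection_orthogonal_val]
  exact Nᗮ.sub_mem ht (orthogonal_le hNK (Kᗮ.starProjection_apply_mem t))

lemma exists_mem_orthogonal_inner_ne_zero {N : Submodule 𝕜 E} [N.HasOrthogonalProjection]
    {x : E} (hx : x ∉ N) : ∃ b ∈ Nᗮ, ⟪b, x⟫_𝕜 ≠ 0 := by
  by_contra! h
  rw [← N.orthogonal_orthogonal] at hx
  exact hx ((Nᗮ.mem_orthogonal x).2 h)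

lemma exists_ne_zero_mem_inf_orthogonal {C N : Submodule 𝕜 E} [C.HasOrthogonalProjection]
    (hCN : C < N) : ∃ e ∈ N ⊓ Cᗮ, e ≠ 0 := by
  by_contra! h
  have hbot : Cᗮ ⊓ N = ⊥ := by
    rw [inf_comm, eq_bot_iff]
    exact fun e he => (mem_bot 𝕜).2 (h e he)
  have hsup := sup_orthogonal_inf_of_hasOrthogonalProjection hCN.le
  rw [hbot, sup_bot_eq] at hsup
  exact hCN.ne hsup

lemma exists_mem_ne_zero_inner_eq_zero {K : Submodule 𝕜 E} {e₁ e₂ : E} (he₁ : e₁ ∈ K)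
    (he₂ : e₂ ∈ K) (he₁₂ : ⟪e₂, e₁⟫_𝕜 = 0) (he₁0 : e₁ ≠ 0) (he₂0 : e₂ ≠ 0) (x : E) :
    ∃ d ∈ K, d ≠ 0 ∧ ⟪x, d⟫_𝕜 = 0 := by
  by_cases hx : ⟪x, e₁⟫_𝕜 = 0
  · exact ⟨e₁, he₁, he₁0, hx⟩
  refine ⟨⟪x, e₂⟫_𝕜 • e₁ - ⟪x, e₁⟫_𝕜 • e₂, K.sub_mem (K.smul_mem _ he₁) (K.smul_mem _ he₂),
    fun h0 => ?_, by rw [inner_sub_right, inner_smul_right, inner_smul_right]; ring⟩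
  have h := congrArg (fun t => ⟪e₂, t⟫_𝕜) h0
  simp only [inner_sub_right, inner_smul_right, he₁₂, mul_zero, zero_sub, inner_zero_right,
    neg_eq_zero, mul_eq_zero, inner_self_eq_zero] at h
  tauto

lemma coe_topologicalClosure_sSup_of_directed {S : Set (Submodule 𝕜 E)} (hS : S.Nonempty)
    (hdir : DirectedOn (· ≤ ·) S) :
    ((sSup S).topologicalClosure : Set E) = closure (⋃ N ∈ S, (N : Set E)) := by
  rw [topologicalClosure_coe]
  congr 1
  ext v
  simp [mem_sSup_of_directed hS hdir]

end Projection

variable {E : Type*} [NormedAddCommGroup E] [InnerProductSpace ℂ E]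

lemma rankOne_apply (x y z : E) : rankOne x y z = ⟪y, z⟫_ℂ • x := rfl

lemma rankOne_comp_rankOne (x y a b : E) :
    (rankOne x y).comp (rankOne a b) = ⟪y, a⟫_ℂ • rankOne x b := by
  ext z
  simp [rankOne_apply, smul_smul, mul_comm]

lemma rankOne_zero_left (y : E) : rankOne (0 : E) y = 0 := by
  ext z; simp [rankOne_apply]

lemma rankOne_zero_right (x : E) : rankOne x (0 : E) = 0 := by
  ext z; simp [rankOne_apply]

lemma continuous_rankOne : Continuous (Function.uncurry (rankOne : E → E → E →L[ℂ] E)) := by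
  unfold rankOne
  fun_prop

lemma projVec_eq_starProjection [CompleteSpace E] {N : Submodule ℂ E} [N.HasOrthogonalProjection]
    (hN : IsClosed (N : Set E)) (z : E) : projVec N z = N.starProjection z := by
  rw [projVec, dif_pos hN]
  rfl

section Nest

variable {𝓛 : Set (Submodule ℂ E)}

lemma IsSubspaceLattice.hasOrthogonalProjection [CompleteSpace E] (h𝓛 : IsSubspaceLattice 𝓛)
    {M : Submodule ℂ E} (hM : M ∈ 𝓛) : M.HasOrthogonalProjection :=
  have := (h𝓛.1 M hM).completeSpace_coe
  inferInstance

lemma IsNest.isChain (h𝓛 : IsNest 𝓛) : IsChain (· ≤ ·) 𝓛 :=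
  fun M hM N hN _ => h𝓛.2 M hM N hN

lemma IsNest.le_or_lt (h𝓛 : IsNest 𝓛) {M N : Submodule ℂ E} (hM : M ∈ 𝓛) (hN : N ∈ 𝓛) :
    M ≤ N ∨ N < M := by
  rcases h𝓛.2 M hM N hN with h | h
  · exact Or.inl h
  · exact (eq_or_lt_of_le h).imp ge_of_eq id

lemma rankOne_mem_nestAlg (h𝓛 : IsNest 𝓛) {N : Submodule ℂ E} (hN : N ∈ 𝓛)
    {a b : E} (ha : a ∈ N) (hb : b ∈ Nᗮ) : rankOne a b ∈ nestAlg 𝓛 := by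
  intro M hM v hv
  rw [rankOne_apply]
  rcases h𝓛.2 M hM N hN with h | h
  · rw [inner_left_of_mem_orthogonal (h hv) hb, zero_smul]
    exact M.zero_mem
  · exact M.smul_mem _ (h ha)

lemma Mx_mem (h𝓛 : IsSubspaceLattice 𝓛) (x : E) : Mx 𝓛 x ∈ 𝓛 :=
  h𝓛.2.2.2.1 _ fun _ hN => hN.1

lemma Mx_le {x : E} {N : Submodule ℂ E} (hN : N ∈ 𝓛) (hx : x ∈ N) : Mx 𝓛 x ≤ N :=
  sInf_le ⟨hN, hx⟩

lemma Mhat_mem (h𝓛 : IsSubspaceLattice 𝓛) (y : E) : Mhat 𝓛 y ∈ 𝓛 :=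
  h𝓛.2.2.2.2 _ fun _ hN => hN.1

lemma le_Mhat {y : E} {N : Submodule ℂ E} (hN : N ∈ 𝓛) (hy : ∀ v ∈ N, ⟪y, v⟫_ℂ = 0) :
    N ≤ Mhat 𝓛 y :=
  (le_sSup (Set.mem_sep hN hy)).trans (le_topologicalClosure _)

lemma exists_inner_ne_zero_of_Mhat_lt {y : E} {N : Submodule ℂ E} (hN : N ∈ 𝓛)
    (hyN : Mhat 𝓛 y < N) : ∃ c ∈ N, ⟪y, c⟫_ℂ ≠ 0 := by
  by_contra! h
  exact hyN.not_ge (le_Mhat hN h)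

lemma IsContinuousNest.le_of_forall_lt_le (h𝓛 : IsContinuousNest 𝓛) {A B : Submodule ℂ E}
    (hA : A ∈ 𝓛) (hB : B ∈ 𝓛) (h : ∀ N ∈ 𝓛, N < B → N ≤ A) : B ≤ A := by
  rw [h𝓛.2 B hB]
  exact topologicalClosure_minimal _ (sSup_le fun N hN => h N hN.1 hN.2) (h𝓛.1.1.1 A hA)

lemma IsContinuousNest.exists_between (h𝓛 : IsContinuousNest 𝓛) {A B : Submodule ℂ E}
    (hA : A ∈ 𝓛) (hB : B ∈ 𝓛) (hAB : A < B) : ∃ C ∈ 𝓛, A < C ∧ C < B := by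
  by_contra! h
  refine hAB.not_ge (h𝓛.le_of_forall_lt_le hA hB fun N hN hNB => ?_)
  exact (h𝓛.1.le_or_lt hN hA).resolve_right fun hAN => h N hN hAN hNB

lemma IsContinuousNest.sInf_gt (h𝓛 : IsContinuousNest 𝓛) {A : Submodule ℂ E} (hA : A ∈ 𝓛) :
    sInf {N ∈ 𝓛 | A < N} = A := by
  refine le_antisymm (h𝓛.le_of_forall_lt_le hA (h𝓛.1.1.2.2.2.1 _ fun _ hN => hN.1)
    fun N hN hNlt => ?_) (le_sInf fun N hN => hN.2.le)
  exact (h𝓛.1.le_or_lt hN hA).resolve_right fun hAN => hNlt.not_ge (sInf_le ⟨hN, hAN⟩)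

lemma IsContinuousNest.exists_mem_inf_orthogonal_inner_eq_zero [CompleteSpace E]
    (h𝓛 : IsContinuousNest 𝓛) {A N : Submodule ℂ E} (hA : A ∈ 𝓛) (hN : N ∈ 𝓛)
    (hAN : A < N) (x : E) : ∃ d ∈ N ⊓ Aᗮ, d ≠ 0 ∧ ⟪x, d⟫_ℂ = 0 := by
  obtain ⟨C, hC, hAC, hCN⟩ := h𝓛.exists_between hA hN hAN
  have := h𝓛.1.1.hasOrthogonalProjection hA
  have := h𝓛.1.1.hasOrthogonalProjection hC
  obtain ⟨e₁, ⟨he₁C, he₁A⟩, he₁0⟩ := exists_ne_zero_mem_inf_orthogonal hAC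
  obtain ⟨e₂, ⟨he₂N, he₂C⟩, he₂0⟩ := exists_ne_zero_mem_inf_orthogonal hCN
  exact exists_mem_ne_zero_inner_eq_zero (K := N ⊓ Aᗮ) ⟨hCN.le he₁C, he₁A⟩
    ⟨he₂N, orthogonal_le hAC.le he₂C⟩ (inner_left_of_mem_orthogonal he₁C he₂C) he₁0 he₂0 x

lemma IsContinuousNest.subset_closure_iUnion_lt (h𝓛 : IsContinuousNest 𝓛)
    {A B : Submodule ℂ E} (hA : A ∈ 𝓛) (hB : B ∈ 𝓛) (hAB : A < B) :
    (B : Set E) ⊆ closure (⋃ N ∈ {N ∈ 𝓛 | N < B}, (N : Set E)) := by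
  rw [← coe_topologicalClosure_sSup_of_directed (⟨A, hA, hAB⟩ : {N ∈ 𝓛 | N < B}.Nonempty)
    (h𝓛.1.isChain.mono fun _ hN => hN.1).directedOn, ← h𝓛.2 B hB]

lemma IsContinuousNest.orthogonal_subset_closure_iUnion_gt [CompleteSpace E]
    (h𝓛 : IsContinuousNest 𝓛) {A B : Submodule ℂ E} (hA : A ∈ 𝓛) (hB : B ∈ 𝓛) (hAB : A < B) :
    (Aᗮ : Set E) ⊆ closure (⋃ N ∈ {N ∈ 𝓛 | A < N}, (Nᗮ : Set E)) := by
  set S := {N ∈ 𝓛 | A < N}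
  set T := (fun N : Submodule ℂ E => Nᗮ) '' S
  have hdir : DirectedOn (· ≤ ·) T := by
    rintro _ ⟨N₁, h₁, rfl⟩ _ ⟨N₂, h₂, rfl⟩
    rcases h𝓛.1.2 N₁ h₁.1 N₂ h₂.1 with h | h
    · exact ⟨N₁ᗮ, ⟨N₁, h₁, rfl⟩, le_rfl, orthogonal_le h⟩
    · exact ⟨N₂ᗮ, ⟨N₂, h₂, rfl⟩, orthogonal_le h, le_rfl⟩
  have hT : (sSup T)ᗮ = A := by
    rw [← sInf_orthogonal, iInf_image, ← h𝓛.sInf_gt hA, sInf_eq_iInf]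
    refine biInf_congr fun N hN => ?_
    have := h𝓛.1.1.hasOrthogonalProjection hN.1
    exact N.orthogonal_orthogonal
  have hS : S.Nonempty := ⟨B, hB, hAB⟩
  rw [← hT, orthogonal_orthogonal_eq_closure,
    coe_topologicalClosure_sSup_of_directed (hS.image _) hdir, Set.biUnion_image]

variable {𝓜 : Submodule ℂ (E →L[ℂ] E)}

lemma IsLieModule.rankOne_mem_of_replace_right (hLie : IsLieModule 𝓛 𝓜) (h𝓛 : IsNest 𝓛)
    {N : Submodule ℂ E} (hN : N ∈ 𝓛) {x y c d : E} (hc : c ∈ N) (hd : d ∈ Nᗮ)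
    (hyc : ⟪y, c⟫_ℂ ≠ 0) (hdx : ⟪d, x⟫_ℂ = 0) (hxy : rankOne x y ∈ 𝓜) : rankOne x d ∈ 𝓜 := by
  have h := hLie _ hxy _ (rankOne_mem_nestAlg h𝓛 hN hc hd)
  rw [rankOne_comp_rankOne, rankOne_comp_rankOne, hdx, zero_smul, sub_zero] at h
  exact (𝓜.smul_mem_iff hyc).1 h

lemma IsLieModule.rankOne_mem_of_replace_left (hLie : IsLieModule 𝓛 𝓜) (h𝓛 : IsNest 𝓛)
    {N : Submodule ℂ E} (hN : N ∈ 𝓛) {x y a b : E} (ha : a ∈ N) (hb : b ∈ Nᗮ)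
    (hya : ⟪y, a⟫_ℂ = 0) (hbx : ⟪b, x⟫_ℂ ≠ 0) (hxy : rankOne x y ∈ 𝓜) : rankOne a y ∈ 𝓜 := by
  have h := hLie _ hxy _ (rankOne_mem_nestAlg h𝓛 hN ha hb)
  rw [rankOne_comp_rankOne, rankOne_comp_rankOne, hya, zero_smul, zero_sub, ← neg_smul] at h
  exact (𝓜.smul_mem_iff (neg_ne_zero.2 hbx)).1 h

lemma IsLieModule.rankOne_mem_of_notMem_of_Mhat_lt [CompleteSpace E] (hLie : IsLieModule 𝓛 𝓜)
    (h𝓛 : IsContinuousNest 𝓛) {x y : E} (hxy : rankOne x y ∈ 𝓜) {M N₁ N₂ : Submodule ℂ E}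
    (hN₁ : N₁ ∈ 𝓛) (hxN₁ : x ∉ N₁) (hN₂ : N₂ ∈ 𝓛) (hyN₂ : Mhat 𝓛 y < N₂) (hN₂M : N₂ ≤ M)
    {a d : E} (ha : a ∈ N₁ ⊓ Mᗮ) (hd : d ∈ M ⊓ N₂ᗮ) : rankOne a d ∈ 𝓜 := by
  have hNest := h𝓛.1
  obtain ⟨C, hC, hyC, hCN₂⟩ := h𝓛.exists_between (Mhat_mem hNest.1 y) hN₂ hyN₂
  obtain ⟨c, hcC, hyc⟩ := exists_inner_ne_zero_of_Mhat_lt hC hyC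
  obtain ⟨d₀, ⟨hd₀N₂, hd₀C⟩, hd₀, hxd₀⟩ := h𝓛.exists_mem_inf_orthogonal_inner_eq_zero hC hN₂ hCN₂ x
  have := hNest.1.hasOrthogonalProjection hN₁
  obtain ⟨b, hb, hbx⟩ := exists_mem_orthogonal_inner_ne_zero hxN₁
  have hxd₀ : rankOne x d₀ ∈ 𝓜 :=
    hLie.rankOne_mem_of_replace_right hNest hC hcC hd₀C hyc (inner_eq_zero_symm.1 hxd₀) hxy
  have had₀ : rankOne a d₀ ∈ 𝓜 :=
    hLie.rankOne_mem_of_replace_left hNest hN₁ ha.1 hb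
      (inner_right_of_mem_orthogonal (hN₂M hd₀N₂) ha.2) hbx hxd₀
  exact hLie.rankOne_mem_of_replace_right hNest hN₂ hd₀N₂ hd.2 (inner_self_ne_zero.2 hd₀)
    (inner_right_of_mem_orthogonal hd.1 ha.2) had₀

lemma IsContinuousNest.starProjection_orthogonal_mem_closure (h𝓛 : IsContinuousNest 𝓛)
    {M B : Submodule ℂ E} (hM : M ∈ 𝓛) (hB : B ∈ 𝓛) (hMB : M < B) [M.HasOrthogonalProjection]
    {q : E} (hq : q ∈ B) :
    Mᗮ.starProjection q ∈ closure (⋃ N ∈ {N ∈ 𝓛 | N < B}, ((N ⊓ Mᗮ : Submodule ℂ E) : Set E)) := by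
  refine map_mem_closure Mᗮ.starProjection.continuous (h𝓛.subset_closure_iUnion_lt hM hB hMB hq)
    fun s hs => ?_
  simp only [Set.mem_iUnion] at hs ⊢
  obtain ⟨N, ⟨hN, hNB⟩, hsN⟩ := hs
  rcases h𝓛.1.2 N hN M hM with hNM | hMN
  · rw [starProjection_orthogonal_apply_eq_zero (hNM hsN)]
    exact ⟨M, ⟨hM, hMB⟩, zero_mem _⟩
  · exact ⟨N, ⟨hN, hNB⟩, starProjection_orthogonal_mem_of_le hMN hsN,
      Mᗮ.starProjection_apply_mem s⟩

lemma IsContinuousNest.starProjection_mem_closure [CompleteSpace E] (h𝓛 : IsContinuousNest 𝓛)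
    {A M : Submodule ℂ E} (hA : A ∈ 𝓛) (hM : M ∈ 𝓛) (hAM : A < M) [M.HasOrthogonalProjection]
    {r : E} (hr : r ∈ Aᗮ) :
    M.starProjection r ∈
      closure (⋃ N ∈ {N ∈ 𝓛 | A < N ∧ N ≤ M}, ((M ⊓ Nᗮ : Submodule ℂ E) : Set E)) := by
  refine map_mem_closure M.starProjection.continuous
    (h𝓛.orthogonal_subset_closure_iUnion_gt hA hM hAM hr) fun t ht => ?_
  simp only [Set.mem_iUnion] at ht ⊢
  obtain ⟨N, ⟨hN, hAN⟩, htN⟩ := ht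
  rcases h𝓛.1.2 N hN M hM with hNM | hMN
  · exact ⟨N, ⟨hN, hAN, hNM⟩, M.starProjection_apply_mem t,
      starProjection_mem_orthogonal_of_le hNM htN⟩
  · rw [(starProjection_apply_eq_zero_iff _).2 (orthogonal_le hMN htN)]
    exact ⟨M, ⟨hM, hAM, le_rfl⟩, zero_mem _⟩

end Nest

theorem stmt_15_general (𝓛 : Set (Submodule ℂ H)) (h𝓛 : IsContinuousNest 𝓛)
    (𝓜 : Submodule ℂ (H →L[ℂ] H)) (hclosed : IsClosed (𝓜 : Set (H →L[ℂ] H)))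
    (hLie : IsLieModule 𝓛 𝓜)
    (x y : H) (hxy : rankOne x y ∈ 𝓜) :
    ∀ (z w : H), ∀ M ∈ 𝓛,
      rankOne (projVec Mᗮ (projVec (Mx 𝓛 x) z))
        (projVec M (projVec ((Mhat 𝓛 y)ᗮ) w)) ∈ 𝓜 := by
  intro z w M hM
  have hLat := h𝓛.1.1
  have hB := Mx_mem hLat x
  have hA := Mhat_mem hLat y
  have := hLat.hasOrthogonalProjection hM
  have := hLat.hasOrthogonalProjection hB
  have := hLat.hasOrthogonalProjection hA
  rw [projVec_eq_starProjection (hLat.1 _ hB), projVec_eq_starProjection (isClosed_orthogonal _),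
    projVec_eq_starProjection (isClosed_orthogonal _), projVec_eq_starProjection (hLat.1 _ hM)]
  rcases h𝓛.1.le_or_lt hB hM with hBM | hMB
  · rw [starProjection_orthogonal_apply_eq_zero (hBM (starProjection_apply_mem _ _)),
      rankOne_zero_left]
    exact 𝓜.zero_mem
  rcases h𝓛.1.le_or_lt hM hA with hMA | hAM
  · rw [(starProjection_apply_eq_zero_iff _).2 (orthogonal_le hMA (starProjection_apply_mem _ _)),
      rankOne_zero_right]
    exact 𝓜.zero_mem
  refine hclosed.closure_subset (map_mem_closure₂ continuous_rankOne
    (h𝓛.starProjection_orthogonal_mem_closure hM hB hMB (starProjection_apply_mem _ _))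
    (h𝓛.starProjection_mem_closure hA hM hAM (starProjection_apply_mem _ _)) ?_)
  simp only [Set.mem_iUnion]
  rintro a ⟨N₁, ⟨hN₁, hN₁B⟩, ha⟩ d ⟨N₂, ⟨hN₂, hAN₂, hN₂M⟩, hd⟩
  exact hLie.rankOne_mem_of_notMem_of_Mhat_lt h𝓛 hxy hN₁
    (fun hxN₁ => hN₁B.not_ge (Mx_le hN₁ hxN₁)) hN₂ hAN₂ hN₂M ha hd

theorem stmt_15 (𝓛 : Set (Submodule ℂ H)) (h𝓛 : IsContinuousNest 𝓛)
    (𝓜 : Submodule ℂ (H →L[ℂ] H)) (hclosed : IsClosed (𝓜 : Set (H →L[ℂ] H)))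
    (hLie : IsLieModule 𝓛 𝓜)
    (x y : H) (hx : x ≠ 0) (hy : y ≠ 0) (hxy : rankOne x y ∈ 𝓜) :
    ∀ (z w : H), ∀ M ∈ 𝓛,
      rankOne (projVec Mᗮ (projVec (Mx 𝓛 x) z))
        (projVec M (projVec ((Mhat 𝓛 y)ᗮ) w)) ∈ 𝓜 :=
  stmt_15_general 𝓛 h𝓛 𝓜 hclosed hLie x y hxy
end
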